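/- Let ψ_T, p_T, ψ, p ∈ (0,1), let K, N be positive integers, and set θ_T = 1 − (1−p_T)^K and θ = 1 − (1−p)^K. Let Y₁, …, Y_N be independent, identically distributed zero-inflated binomial (ZIB) random variables with parameters (ψ_T, K, p_T), let s_d be the number of indices i with Y_i ≥ 1 and d = ∑_{i=1}^N Y_i, and define S₂ = (d − s_d·K·p)/(p(1−p)) − (N − s_d)·ψ·K·(1−θ)/((1 − ψθ)(1−p)). Then Var(S₂) = N·ψ_T·θ_T·v/(p²(1−p)²) + N·ψ_T·θ_T·(1 − ψ_T·θ_T)·((K·p_T − K·p·θ_T)/(θ_T·p(1−p)) + ψ·K·(1−θ)/((1 − ψθ)(1−p)))², where v = (K²p_T² − K·p_T² + K·p_T)/θ_T − K²p_T²/θ_T². -/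

import Mathlib

/-- The probability mass function of the zero-inflated binomial distribution with
parameters `ψ`, `K`, `p`, for values `y = 0, 1, …, K`. -/
def zibPmf (ψ p : ℝ) (K : ℕ) (y : ℕ) : ℝ :=
  if y = 0 then 1 - ψ + ψ * (1 - p) ^ K
  else ψ * (K.choose y : ℝ) * p ^ y * (1 - p) ^ (K - y)

/-- Joint pmf of `N` i.i.d. zero-inflated binomial observations, each taking values in
`{0, 1, …, K}` (encoded as `Fin (K+1)`). -/
def zibJoint (ψ p : ℝ) (K N : ℕ) (ω : Fin N → Fin (K + 1)) : ℝ :=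
  ∏ i, zibPmf ψ p K (ω i)

/-- Expectation of a statistic `f` of `N` i.i.d. ZIB`(ψ, K, p)` observations. -/
def zibExp (ψ p : ℝ) (K N : ℕ) (f : (Fin N → Fin (K + 1)) → ℝ) : ℝ :=
  ∑ ω : Fin N → Fin (K + 1), zibJoint ψ p K N ω * f ω

/-- The total number of detections `d = ∑ᵢ Yᵢ`. -/
def dTot {K N : ℕ} (ω : Fin N → Fin (K + 1)) : ℝ :=
  ∑ i, ((ω i : ℕ) : ℝ)

/-- The number of sites with at least one detection, `s_d = #{i : Yᵢ ≥ 1}`. -/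
def sDet {K N : ℕ} (ω : Fin N → Fin (K + 1)) : ℝ :=
  ((Finset.univ.filter fun i => (ω i : ℕ) ≠ 0).card : ℝ)

/-!
Writing `c = ψK(1-θ)/((1-ψθ)(1-p))`, the statistic is `S₂ = ∑ᵢ g(Yᵢ)` with `g = s2Summand K p c`,
i.e. `g 0 = -c` and `g y = (y - Kp)/(p(1-p))` for `y ≥ 1`, so by independence `Var S₂ = N · Var g(Y)`.
Since ZIB`(ψ_T, K, p_T)` is the mixture `(1-ψ_T) δ₀ + ψ_T Bin(K, p_T)`, the first two moments of
`g(Y)` reduce to the mean `K p_T` and variance `K p_T (1-p_T)` of the binomial distribution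
(identities for Bernstein polynomials); the stated formula is an algebraic rearrangement.
-/

open Finset

section IidExpect

variable {ι α : Type*} [Fintype ι] [DecidableEq ι] [Fintype α] (w : α → ℝ)

def iidExpect (f : (ι → α) → ℝ) : ℝ :=
  ∑ ω : ι → α, (∏ k, w (ω k)) * f ω

theorem iidExpect_sum {κ : Type*} (s : Finset κ) (f : κ → (ι → α) → ℝ) :
    iidExpect w (fun ω => ∑ i ∈ s, f i ω) = ∑ i ∈ s, iidExpect w (f i) := by
  simp only [iidExpect, mul_sum]
  exact sum_comm

theorem iidExpect_prod (f : ι → α → ℝ) :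
    iidExpect w (fun ω => ∏ k, f k (ω k)) = ∏ k, ∑ y, w y * f k y := by
  simp only [iidExpect, ← prod_mul_distrib]
  exact (Fintype.prod_sum (fun k y => w y * f k y)).symm

variable {w}

theorem iidExpect_apply (hw : ∑ y, w y = 1) (i : ι) (g : α → ℝ) :
    iidExpect w (fun ω => g (ω i)) = ∑ y, w y * g y := by
  have h := iidExpect_prod w (fun k y => if k = i then g y else 1)
  have factor : ∀ k, ∑ y, w y * (if k = i then g y else 1) =
      if k = i then ∑ y, w y * g y else 1 := by
    intro k; split_ifs <;> simp [hw]
  simpa only [prod_ite_eq', mem_univ, if_true, factor] using h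

theorem iidExpect_apply_mul_apply (hw : ∑ y, w y = 1) {i j : ι} (hij : i ≠ j) (g h : α → ℝ) :
    iidExpect w (fun ω => g (ω i) * h (ω j)) = (∑ y, w y * g y) * ∑ y, w y * h y := by
  have H := iidExpect_prod w
    (fun k y => (if k = i then g y else 1) * (if k = j then h y else 1))
  have factor : ∀ k, ∑ y, w y * ((if k = i then g y else 1) * (if k = j then h y else 1)) =
      (if k = i then ∑ y, w y * g y else 1) * (if k = j then ∑ y, w y * h y else 1) := by
    intro k; split_ifs with hi hj hj <;> simp_all
  simpa only [prod_mul_distrib, prod_ite_eq', mem_univ, if_true, factor] using H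

theorem iidExpect_sum_sq_sub_sq (hw : ∑ y, w y = 1) (h : α → ℝ) :
    iidExpect w (fun ω : ι → α => (∑ i, h (ω i)) ^ 2) -
        iidExpect w (fun ω : ι → α => ∑ i, h (ω i)) ^ 2 =
      Fintype.card ι * (∑ y, w y * h y ^ 2 - (∑ y, w y * h y) ^ 2) := by
  set m₁ := ∑ y, w y * h y
  set m₂ := ∑ y, w y * h y ^ 2
  have cross : ∀ i j : ι, iidExpect w (fun ω => h (ω i) * h (ω j)) =
      m₁ ^ 2 + if i = j then m₂ - m₁ ^ 2 else 0 := by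
    intro i j
    rcases eq_or_ne i j with rfl | hij
    · simp [← sq, iidExpect_apply hw i (fun y => h y ^ 2), m₂]
    · rw [iidExpect_apply_mul_apply hw hij, if_neg hij, add_zero, sq]
  simp only [sq (∑ i, _), sum_mul_sum, iidExpect_sum, iidExpect_apply hw, cross,
    sum_add_distrib, sum_ite_eq, mem_univ, if_true, sum_const, card_univ, nsmul_eq_mul]
  ring

end IidExpect

section Bernstein

variable (n : ℕ) (x : ℝ)

theorem sum_bernsteinPolynomial_eval :
    ∑ k ∈ range (n + 1), (bernsteinPolynomial ℝ n k).eval x = 1 := by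
  simpa [Polynomial.eval_finsetSum] using
    congrArg (Polynomial.eval x) (bernsteinPolynomial.sum ℝ n)

theorem sum_sub_mul_bernsteinPolynomial_eval (a : ℝ) :
    ∑ k ∈ range (n + 1), ((k : ℝ) - a) * (bernsteinPolynomial ℝ n k).eval x = n * x - a := by
  have h := congrArg (Polynomial.eval x) (bernsteinPolynomial.sum_smul ℝ n)
  simp only [Polynomial.eval_finsetSum, nsmul_eq_mul, Polynomial.eval_mul,
    Polynomial.eval_natCast, Polynomial.eval_X] at h
  simp only [sub_mul, sum_sub_distrib, h, ← mul_sum, sum_bernsteinPolynomial_eval, mul_one]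

theorem sum_sub_sq_mul_bernsteinPolynomial_eval (a : ℝ) :
    ∑ k ∈ range (n + 1), ((k : ℝ) - a) ^ 2 * (bernsteinPolynomial ℝ n k).eval x =
      n * x * (1 - x) + (n * x - a) ^ 2 := by
  have h := congrArg (Polynomial.eval x) (bernsteinPolynomial.variance ℝ n)
  simp only [Polynomial.eval_finsetSum, nsmul_eq_mul, Polynomial.eval_mul, Polynomial.eval_pow,
    Polynomial.eval_sub, Polynomial.eval_X, Polynomial.eval_natCast, Polynomial.eval_one] at h
  calc ∑ k ∈ range (n + 1), ((k : ℝ) - a) ^ 2 * (bernsteinPolynomial ℝ n k).eval x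
      = ∑ k ∈ range (n + 1), ((n * x - k) ^ 2 * (bernsteinPolynomial ℝ n k).eval x
          + 2 * (n * x - a) * (((k : ℝ) - n * x) * (bernsteinPolynomial ℝ n k).eval x)
          + (n * x - a) ^ 2 * (bernsteinPolynomial ℝ n k).eval x) :=
        sum_congr rfl fun k _ => by ring
    _ = n * x * (1 - x) + (n * x - a) ^ 2 := by
        rw [sum_add_distrib, sum_add_distrib, ← mul_sum, ← mul_sum, h,
          sum_sub_mul_bernsteinPolynomial_eval, sum_bernsteinPolynomial_eval]
        ring

end Bernstein

theorem zibPmf_eq (ψ p : ℝ) (K y : ℕ) :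
    zibPmf ψ p K y =
      (1 - ψ) * (if y = 0 then 1 else 0) + ψ * (bernsteinPolynomial ℝ K y).eval p := by
  rcases eq_or_ne y 0 with rfl | hy
  · simp [zibPmf, bernsteinPolynomial]
  · simp only [zibPmf, hy, ↓reduceIte, mul_zero, bernsteinPolynomial, Polynomial.eval_mul,
      Polynomial.eval_natCast, Polynomial.eval_pow, Polynomial.eval_X, Polynomial.eval_sub,
      Polynomial.eval_one, zero_add]
    ring

theorem sum_zibPmf_mul (ψ p : ℝ) (K : ℕ) (g : ℕ → ℝ) :
    ∑ y : Fin (K + 1), zibPmf ψ p K y * g y =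
      (1 - ψ) * g 0 + ψ * ∑ k ∈ range (K + 1), (bernsteinPolynomial ℝ K k).eval p * g k := by
  rw [Fin.sum_univ_eq_sum_range (fun k => zibPmf ψ p K k * g k)]
  simp only [zibPmf_eq, add_mul, sum_add_distrib, mul_assoc, ← mul_sum, ite_mul, one_mul,
    zero_mul, sum_ite_eq', mem_range, Nat.zero_lt_succ, if_true]

theorem sum_zibPmf_mul_ite (ψ p : ℝ) (K : ℕ) (a : ℝ) (G : ℕ → ℝ) :
    ∑ y : Fin (K + 1), zibPmf ψ p K y * (if (y : ℕ) = 0 then a else G y) =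
      (1 - ψ * (1 - (1 - p) ^ K)) * a +
        ψ * (∑ k ∈ range (K + 1), (bernsteinPolynomial ℝ K k).eval p * G k -
          (1 - p) ^ K * G 0) := by
  refine (sum_zibPmf_mul ψ p K fun y => if y = 0 then a else G y).trans ?_
  rw [sum_range_succ', sum_range_succ' (fun k => _ * G k)]
  simp only [↓reduceIte, bernsteinPolynomial, Polynomial.eval_mul, Polynomial.eval_natCast,
    Polynomial.eval_pow, Polynomial.eval_X, Polynomial.eval_sub, Polynomial.eval_one,
    Nat.add_eq_zero_iff, one_ne_zero, and_false, Nat.choose_zero_right, Nat.cast_one, pow_zero,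
    mul_one, tsub_zero, one_mul, add_sub_cancel_right]
  ring

theorem sum_zibPmf (ψ p : ℝ) (K : ℕ) : ∑ y : Fin (K + 1), zibPmf ψ p K y = 1 := by
  simpa [sum_bernsteinPolynomial_eval] using sum_zibPmf_mul ψ p K fun _ => 1

theorem zibExp_eq_iidExpect (ψ p : ℝ) (K N : ℕ) (f : (Fin N → Fin (K + 1)) → ℝ) :
    zibExp ψ p K N f = iidExpect (fun y : Fin (K + 1) => zibPmf ψ p K y) f :=
  rfl

noncomputable def s2Summand (K : ℕ) (p c : ℝ) (y : ℕ) : ℝ :=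
  if y = 0 then -c else ((y : ℝ) - K * p) / (p * (1 - p))

theorem sum_zibPmf_mul_s2Summand (ψ q p c : ℝ) (K : ℕ) :
    ∑ y : Fin (K + 1), zibPmf ψ q K y * s2Summand K p c y =
      ψ * (K * q - K * p * (1 - (1 - q) ^ K)) / (p * (1 - p)) -
        (1 - ψ * (1 - (1 - q) ^ K)) * c := by
  have h : ∑ k ∈ range (K + 1),
        (bernsteinPolynomial ℝ K k).eval q * (((k : ℝ) - K * p) / (p * (1 - p))) =
      (K * q - K * p) / (p * (1 - p)) := by
    rw [← sum_sub_mul_bernsteinPolynomial_eval, sum_div]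
    exact sum_congr rfl fun k _ => by ring
  refine (sum_zibPmf_mul_ite ψ q K (-c) fun k => ((k : ℝ) - K * p) / (p * (1 - p))).trans ?_
  rw [h]
  simp only [mul_neg, CharP.cast_eq_zero, zero_sub]
  ring

theorem sum_zibPmf_mul_s2Summand_sq (ψ q p c : ℝ) (K : ℕ) :
    ∑ y : Fin (K + 1), zibPmf ψ q K y * s2Summand K p c y ^ 2 =
      (1 - ψ * (1 - (1 - q) ^ K)) * c ^ 2 + ψ * (K * q * (1 - q) + (K * q - K * p) ^ 2
        - (1 - q) ^ K * (K * p) ^ 2) / (p * (1 - p)) ^ 2 := by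
  have h : ∑ k ∈ range (K + 1),
        (bernsteinPolynomial ℝ K k).eval q * (((k : ℝ) - K * p) / (p * (1 - p))) ^ 2 =
      (K * q * (1 - q) + (K * q - K * p) ^ 2) / (p * (1 - p)) ^ 2 := by
    rw [← sum_sub_sq_mul_bernsteinPolynomial_eval, sum_div]
    exact sum_congr rfl fun k _ => by rw [div_pow]; ring
  simp only [s2Summand, ite_pow]
  refine (sum_zibPmf_mul_ite ψ q K ((-c) ^ 2)
    fun k => (((k : ℝ) - K * p) / (p * (1 - p))) ^ 2).trans ?_
  rw [h]
  simp only [even_two, Even.neg_pow, CharP.cast_eq_zero, zero_sub, div_pow]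
  ring

theorem s2Summand_eq (K : ℕ) (p c : ℝ) (y : ℕ) :
    s2Summand K p c y =
      ((y : ℝ) - (if y ≠ 0 then 1 else 0) * (K * p)) / (p * (1 - p)) -
        (1 - if y ≠ 0 then 1 else 0) * c := by
  rcases eq_or_ne y 0 with rfl | hy
  · simp [s2Summand]
  · simp [s2Summand, hy]

theorem s2_eq_sum_s2Summand {K N : ℕ} (p c : ℝ) (ω : Fin N → Fin (K + 1)) :
    (dTot ω - sDet ω * K * p) / (p * (1 - p)) - (N - sDet ω) * c =
      ∑ i, s2Summand K p c (ω i) := by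
  simp only [s2Summand_eq, sum_sub_distrib, ← sum_div, ← sum_mul, dTot, sDet,
    natCast_card_filter, sum_const, card_univ, Fintype.card_fin, nsmul_eq_mul, mul_one]
  ring

theorem zib_score_S2_variance_general (ψT pT ψ p : ℝ)
    (hpT0 : 0 < pT) (hpT1 : pT < 1) (hp0 : 0 < p) (hp1 : p < 1)
    (K N : ℕ) (hK : 0 < K) :
    zibExp ψT pT K N (fun ω =>
          ((dTot ω - sDet ω * (K : ℝ) * p) / (p * (1 - p)) -
            ((N : ℝ) - sDet ω) * ψ * (K : ℝ) * (1 - (1 - (1 - p) ^ K)) /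
              ((1 - ψ * (1 - (1 - p) ^ K)) * (1 - p))) ^ 2) -
        (zibExp ψT pT K N (fun ω =>
          (dTot ω - sDet ω * (K : ℝ) * p) / (p * (1 - p)) -
            ((N : ℝ) - sDet ω) * ψ * (K : ℝ) * (1 - (1 - (1 - p) ^ K)) /
              ((1 - ψ * (1 - (1 - p) ^ K)) * (1 - p)))) ^ 2 =
      (N : ℝ) * ψT * (1 - (1 - pT) ^ K) *
          (((K : ℝ) ^ 2 * pT ^ 2 - (K : ℝ) * pT ^ 2 + (K : ℝ) * pT) / (1 - (1 - pT) ^ K) -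
            (K : ℝ) ^ 2 * pT ^ 2 / (1 - (1 - pT) ^ K) ^ 2) /
          (p ^ 2 * (1 - p) ^ 2) +
        (N : ℝ) * ψT * (1 - (1 - pT) ^ K) * (1 - ψT * (1 - (1 - pT) ^ K)) *
          (((K : ℝ) * pT - (K : ℝ) * p * (1 - (1 - pT) ^ K)) /
              ((1 - (1 - pT) ^ K) * p * (1 - p)) +
            ψ * (K : ℝ) * (1 - (1 - (1 - p) ^ K)) /
              ((1 - ψ * (1 - (1 - p) ^ K)) * (1 - p))) ^ 2 := by
  set c := ψ * (K : ℝ) * (1 - (1 - (1 - p) ^ K)) / ((1 - ψ * (1 - (1 - p) ^ K)) * (1 - p))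
  have hS : ∀ ω : Fin N → Fin (K + 1),
      (dTot ω - sDet ω * K * p) / (p * (1 - p)) -
          (N - sDet ω) * ψ * K * (1 - (1 - (1 - p) ^ K)) /
            ((1 - ψ * (1 - (1 - p) ^ K)) * (1 - p)) =
        ∑ i, s2Summand K p c (ω i) := fun ω => by
    rw [← s2_eq_sum_s2Summand]; ring
  have hθT : 1 - (1 - pT) ^ K ≠ 0 := by
    have : (1 - pT) ^ K < 1 := pow_lt_one₀ (by linarith) (by linarith) hK.ne'
    linarith
  have hp : p ≠ 0 := hp0.ne'
  have hp' : 1 - p ≠ 0 := by linarith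
  simp only [hS]
  rw [zibExp_eq_iidExpect, zibExp_eq_iidExpect,
    iidExpect_sum_sq_sub_sq (sum_zibPmf ψT pT K) fun y => s2Summand K p c y,
    sum_zibPmf_mul_s2Summand_sq, sum_zibPmf_mul_s2Summand, Fintype.card_fin]
  field_simp
  ring

/-- With data `Y₁, …, Y_N` i.i.d. ZIB`(ψ_T, K, p_T)`,
`θ_T = 1 − (1−p_T)^K`, `θ = 1 − (1−p)^K`, and score component
`S₂ = (d − s_d K p)/(p(1−p)) − (N − s_d) ψ K (1−θ)/((1 − ψθ)(1−p))`, one has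
`Var(S₂) = N ψ_T θ_T v/(p²(1−p)²)
  + N ψ_T θ_T (1 − ψ_T θ_T) ((K p_T − K p θ_T)/(θ_T p(1−p)) + ψ K (1−θ)/((1 − ψθ)(1−p)))²`,
where `v = (K²p_T² − K p_T² + K p_T)/θ_T − K²p_T²/θ_T²`. -/
theorem zib_score_S2_variance (ψT pT ψ p : ℝ)
    (hψT0 : 0 < ψT) (hψT1 : ψT < 1) (hpT0 : 0 < pT) (hpT1 : pT < 1)
    (hψ0 : 0 < ψ) (hψ1 : ψ < 1) (hp0 : 0 < p) (hp1 : p < 1)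
    (K N : ℕ) (hK : 0 < K) (hN : 0 < N) :
    zibExp ψT pT K N (fun ω =>
          ((dTot ω - sDet ω * (K : ℝ) * p) / (p * (1 - p)) -
            ((N : ℝ) - sDet ω) * ψ * (K : ℝ) * (1 - (1 - (1 - p) ^ K)) /
              ((1 - ψ * (1 - (1 - p) ^ K)) * (1 - p))) ^ 2) -
        (zibExp ψT pT K N (fun ω =>
          (dTot ω - sDet ω * (K : ℝ) * p) / (p * (1 - p)) -
            ((N : ℝ) - sDet ω) * ψ * (K : ℝ) * (1 - (1 - (1 - p) ^ K)) /
              ((1 - ψ * (1 - (1 - p) ^ K)) * (1 - p)))) ^ 2 =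
      (N : ℝ) * ψT * (1 - (1 - pT) ^ K) *
          (((K : ℝ) ^ 2 * pT ^ 2 - (K : ℝ) * pT ^ 2 + (K : ℝ) * pT) / (1 - (1 - pT) ^ K) -
            (K : ℝ) ^ 2 * pT ^ 2 / (1 - (1 - pT) ^ K) ^ 2) /
          (p ^ 2 * (1 - p) ^ 2) +
        (N : ℝ) * ψT * (1 - (1 - pT) ^ K) * (1 - ψT * (1 - (1 - pT) ^ K)) *
          (((K : ℝ) * pT - (K : ℝ) * p * (1 - (1 - pT) ^ K)) /
              ((1 - (1 - pT) ^ K) * p * (1 - p)) +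
            ψ * (K : ℝ) * (1 - (1 - (1 - p) ^ K)) /
              ((1 - ψ * (1 - (1 - p) ^ K)) * (1 - p))) ^ 2 :=
  zib_score_S2_variance_general ψT pT ψ p hpT0 hpT1 hp0 hp1 K N hK
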